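/- arXiv:2205.00527 — 5 statements merged into one kernel-verified Lean document; each statement's English description precedes it below -/
import Mathlib

section
/- For every nonnegative integer n, the number of partitions into distinct parts π = (λ1, λ2, …) with O(π) = n equals the number of (ordinary) partitions of n. (Note that the set of partitions into distinct parts with O(π) = n is finite, since all parts are at most λ1 ≤ n.) -/
/-- Sum of `f` over the entries of a list at even 0-based positions, i.e. over the
odd-indexed parts `λ1, λ3, λ5, …` of a partition `(λ1, λ2, λ3, …)`. -/
def sumAlt (f : ℕ → ℕ) : List ℕ → ℕ
  | [] => 0
  | [a] => f a
  | a :: _ :: l => f a + sumAlt f l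

/-- `O(π) = λ1 + λ3 + λ5 + ⋯`, the sum of the odd-indexed parts. -/
def Osum (l : List ℕ) : ℕ := sumAlt id l

/-- `E(π) = λ2 + λ4 + λ6 + ⋯`, the sum of the even-indexed parts. -/
def Esum (l : List ℕ) : ℕ := sumAlt id l.tail

/-- `γ(π) = λ1 − λ2 + λ3 − λ4 + ⋯ = O(π) − E(π)`, the alternating sum of the parts.
For a weakly decreasing list we have `Osum l ≥ Esum l`, so natural subtraction is exact. -/
def gammaSum (l : List ℕ) : ℕ := Osum l - Esum l

/-- `⌈O⌉(π) = ∑ ⌈λ_{2i−1}/2⌉`. -/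
def ceilO (l : List ℕ) : ℕ := sumAlt (fun a => (a + 1) / 2) l

/-- `⌊O⌋(π) = ∑ ⌊λ_{2i−1}/2⌋`. -/
def floorO (l : List ℕ) : ℕ := sumAlt (fun a => a / 2) l

/-- `⌈E⌉(π) = ∑ ⌈λ_{2i}/2⌉`. -/
def ceilE (l : List ℕ) : ℕ := sumAlt (fun a => (a + 1) / 2) l.tail

/-- `⌊E⌋(π) = ∑ ⌊λ_{2i}/2⌋`. -/
def floorE (l : List ℕ) : ℕ := sumAlt (fun a => a / 2) l.tail

/-- A partition: a weakly decreasing finite list of positive integers. -/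
def IsPartition (l : List ℕ) : Prop := l.Pairwise (· ≥ ·) ∧ ∀ x ∈ l, 0 < x

/-- A partition into distinct parts: a strictly decreasing finite list of positive integers. -/
def IsDistinctPartition (l : List ℕ) : Prop := l.Pairwise (· > ·) ∧ ∀ x ∈ l, 0 < x

/-- The Gaussian binomial coefficient `[n choose k]_q` as a polynomial in `q`
(defined by the q-Pascal recurrence; it equals `(q;q)_n / ((q;q)_k (q;q)_{n−k})`). -/
noncomputable def qbinom : ℕ → ℕ → Polynomial ℤ
  | _, 0 => 1
  | 0, _ + 1 => 0
  | n + 1, k + 1 => qbinom n k + Polynomial.X ^ (k + 1) * qbinom n (k + 1)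

/-!
A partition `μ` of `n` is determined by its Frobenius coordinates: the `i`-th diagonal hook has
arm `αᵢ = μᵢ - i` and leg `βᵢ = μ'ᵢ - i`, where `α₁ > α₂ > ⋯ > α_d ≥ 0`, `β₁ > ⋯ > β_d ≥ 0` and
`n = ∑ (αᵢ + βᵢ + 1)`. Putting `λ_{2i-1} = αᵢ + βᵢ + 1` and `λ_{2i} = βᵢ + α_{i+1} + 1`, with
`α_{d+1} = -1` and `λ_{2d}` dropped when it is `0`, gives a partition into distinct parts with
`O(λ) = n`; conversely `αᵢ - α_{i+1} = λ_{2i-1} - λ_{2i}` recovers the coordinates from `λ`.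
Peeling off the first hook (the first row `c` and the first column of the `L` rows below it)
makes this a recursion: `λ₁ = c + L` and `λ₂ = L + μ₂ - 1`.
-/

open List

lemma isPartition_cons_iff {c : ℕ} {m : List ℕ} :
    IsPartition (c :: m) ↔ 0 < c ∧ (∀ x ∈ m, x ≤ c) ∧ IsPartition m := by
  simp only [IsPartition, pairwise_cons, mem_cons, forall_eq_or_imp]
  tauto

lemma isDistinctPartition_cons_iff {c : ℕ} {m : List ℕ} :
    IsDistinctPartition (c :: m) ↔ 0 < c ∧ (∀ x ∈ m, x < c) ∧ IsDistinctPartition m := by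
  simp only [IsDistinctPartition, pairwise_cons, mem_cons, forall_eq_or_imp]
  tauto

lemma IsDistinctPartition.isPartition {l : List ℕ} (h : IsDistinctPartition l) : IsPartition l :=
  ⟨h.1.imp le_of_lt, h.2⟩

lemma IsPartition.le_headI {m : List ℕ} (hm : IsPartition m) {x : ℕ} (hx : x ∈ m) :
    x ≤ m.headI := by
  cases m with
  | nil => simp at hx
  | cons c m =>
    rcases mem_cons.1 hx with rfl | hx
    · rfl
    · exact (isPartition_cons_iff.1 hm).2.1 x hx

lemma IsDistinctPartition.headI_tail_lt {b : ℕ} {l : List ℕ} (h : IsDistinctPartition (b :: l)) :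
    l.headI < b := by
  obtain ⟨hb, hl, -⟩ := isDistinctPartition_cons_iff.1 h
  cases l with
  | nil => exact hb
  | cons x l => exact hl x mem_cons_self

lemma IsPartition.headI_tail_le {c : ℕ} {m : List ℕ} (h : IsPartition (c :: m)) : m.headI ≤ c := by
  obtain ⟨-, hm, -⟩ := isPartition_cons_iff.1 h
  cases m with
  | nil => exact Nat.zero_le c
  | cons x m => exact hm x mem_cons_self

/-- The diagram of `ν` with a new first column of height `L`, provided `ν.length ≤ L`. -/
def addColumn (L : ℕ) (ν : List ℕ) : List ℕ :=
  ν.map (· + 1) ++ replicate (L - ν.length) 1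

def dropColumn (m : List ℕ) : List ℕ :=
  (m.takeWhile (2 ≤ ·)).map (· - 1)

section Columns

variable {L : ℕ} {ν m : List ℕ}

lemma length_addColumn (h : ν.length ≤ L) : (addColumn L ν).length = L := by
  simp only [addColumn, length_append, length_map, length_replicate]
  omega

lemma sum_addColumn (h : ν.length ≤ L) : (addColumn L ν).sum = ν.sum + L := by
  simp only [addColumn, sum_append, sum_map_add, map_id', map_const', sum_replicate, smul_eq_mul, mul_one]
  omega

lemma IsPartition.le_of_mem_addColumn (hν : IsPartition ν) {x : ℕ} (hx : x ∈ addColumn L ν) :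
    x ≤ ν.headI + 1 := by
  rcases mem_append.1 hx with hx | hx
  · obtain ⟨y, hy, rfl⟩ := mem_map.1 hx
    exact Nat.succ_le_succ (hν.le_headI hy)
  · rw [eq_of_mem_replicate hx]
    omega

lemma isPartition_addColumn (hν : IsPartition ν) (L : ℕ) : IsPartition (addColumn L ν) := by
  refine ⟨pairwise_append.2 ⟨pairwise_map.2 (hν.1.imp (by omega)),
    pairwise_replicate.2 (Or.inr le_rfl), ?_⟩, ?_⟩
  · intro x hx y hy
    obtain ⟨z, -, rfl⟩ := mem_map.1 hx
    rw [eq_of_mem_replicate hy]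
    omega
  · intro x hx
    rcases mem_append.1 hx with hx | hx
    · obtain ⟨z, -, rfl⟩ := mem_map.1 hx
      omega
    · rw [eq_of_mem_replicate hx]
      omega

lemma dropColumn_addColumn (hν : ∀ x ∈ ν, 0 < x) (L : ℕ) : dropColumn (addColumn L ν) = ν := by
  have hge : ∀ x ∈ ν.map (· + 1), decide (2 ≤ x) = true := by
    intro x hx
    obtain ⟨y, hy, rfl⟩ := mem_map.1 hx
    have := hν y hy
    simp only [decide_eq_true_eq]
    omega
  simp [dropColumn, addColumn, takeWhile_append_of_pos hge, Function.comp_def]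

lemma length_dropColumn_le (m : List ℕ) : (dropColumn m).length ≤ m.length := by
  simpa [dropColumn] using (takeWhile_sublist _).length_le

lemma headI_dropColumn (m : List ℕ) : (dropColumn m).headI = m.headI - 1 := by
  cases m with
  | nil => rfl
  | cons x m =>
    by_cases hx : 2 ≤ x
    · simp [dropColumn, hx]
    · simp only [dropColumn, hx, decide_false, Bool.false_eq_true, not_false_eq_true,
        takeWhile_cons_of_neg, map_nil, headI_nil, Nat.default_eq_zero, headI_cons]
      omega

lemma isPartition_dropColumn (hm : m.Pairwise (· ≥ ·)) : IsPartition (dropColumn m) := by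
  have hge : ∀ x ∈ m.takeWhile (2 ≤ ·), 2 ≤ x := fun x hx => by simpa using mem_takeWhile_imp hx
  refine ⟨pairwise_map.2 ((hm.sublist (takeWhile_sublist _)).imp (by omega)), ?_⟩
  intro x hx
  obtain ⟨y, hy, rfl⟩ := mem_map.1 hx
  have := hge y hy
  omega

lemma addColumn_dropColumn (hm : IsPartition m) :
    addColumn m.length (dropColumn m) = m := by
  induction m with
  | nil => rfl
  | cons x m ih =>
    obtain ⟨hx, hmx, hm⟩ := isPartition_cons_iff.1 hm
    by_cases h2 : 2 ≤ x
    · have hx' : x - 1 + 1 = x := by omega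
      simpa [dropColumn, addColumn, h2, hx'] using ih hm
    · have hones : ∀ y ∈ x :: m, y = 1 := by
        intro y hy
        rcases mem_cons.1 hy with rfl | hy
        · omega
        · have := hmx y hy
          have := hm.2 y hy
          omega
      simpa [dropColumn, addColumn, h2] using (eq_replicate_of_mem hones).symm

end Columns

def toPartition : List ℕ → List ℕ
  | [] => []
  | [a] => [a]
  | a :: b :: l =>
    (a - b + (toPartition l).headI) :: addColumn (b - (toPartition l).headI) (toPartition l)

def toDistinct : List ℕ → List ℕ
  | [] => []
  | c :: m =>
    if m = [] then [c]
    else (c + m.length) :: (m.length + (dropColumn m).headI) :: toDistinct (dropColumn m)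
termination_by μ => μ.length
decreasing_by exact Nat.lt_succ_of_le (length_dropColumn_le m)

lemma toPartition_eq_nil_iff {l : List ℕ} : toPartition l = [] ↔ l = [] := by
  match l with
  | [] => simp [toPartition]
  | [a] => simp [toPartition]
  | a :: b :: l => simp [toPartition]

lemma headI_add_length_toPartition {l : List ℕ} (hl : IsDistinctPartition l) (hne : l ≠ []) :
    (toPartition l).headI + (toPartition l).length = l.headI + 1 := by
  induction l using toPartition.induct with
  | case1 => contradiction
  | case2 a => simp [toPartition]
  | case3 a b l ih =>
    obtain ⟨-, hab, hbl⟩ := isDistinctPartition_cons_iff.1 hl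
    have hb := hbl.headI_tail_lt
    have hfit : (toPartition l).headI + (toPartition l).length ≤ b := by
      rcases eq_or_ne l [] with rfl | hne
      · simp [toPartition]
      · have := ih (isDistinctPartition_cons_iff.1 hbl).2.2 hne
        omega
    have := hab b mem_cons_self
    have hlen := length_addColumn
      (show (toPartition l).length ≤ b - (toPartition l).headI by omega)
    simp only [toPartition, headI_cons, length_cons, hlen]
    omega

lemma toPartition_fits {b : ℕ} {l : List ℕ} (h : IsDistinctPartition (b :: l)) :
    (toPartition l).headI < b ∧ (toPartition l).length ≤ b - (toPartition l).headI := by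
  have hb := h.headI_tail_lt
  rcases eq_or_ne l [] with rfl | hne
  · simpa [toPartition] using (isDistinctPartition_cons_iff.1 h).1
  · have := headI_add_length_toPartition (isDistinctPartition_cons_iff.1 h).2.2 hne
    have := length_pos_iff.2 (toPartition_eq_nil_iff.not.2 hne)
    omega

lemma sum_toPartition {l : List ℕ} (hl : IsDistinctPartition l) :
    (toPartition l).sum = Osum l := by
  induction l using toPartition.induct with
  | case1 => rfl
  | case2 a => rfl
  | case3 a b l ih =>
    obtain ⟨-, hab, hbl⟩ := isDistinctPartition_cons_iff.1 hl
    obtain ⟨hb, hfit⟩ := toPartition_fits hbl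
    have := hab b mem_cons_self
    rw [toPartition, sum_cons, sum_addColumn hfit, ih (isDistinctPartition_cons_iff.1 hbl).2.2]
    simp only [Osum, sumAlt, id]
    omega

lemma isPartition_toPartition {l : List ℕ} (hl : IsDistinctPartition l) :
    IsPartition (toPartition l) := by
  induction l using toPartition.induct with
  | case1 => simp [toPartition, IsPartition]
  | case2 a => simpa [toPartition, IsPartition, IsDistinctPartition] using hl
  | case3 a b l ih =>
    obtain ⟨-, hab, hbl⟩ := isDistinctPartition_cons_iff.1 hl
    have hν := ih (isDistinctPartition_cons_iff.1 hbl).2.2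
    have := hab b mem_cons_self
    refine isPartition_cons_iff.2 ⟨by omega, fun x hx => ?_, isPartition_addColumn hν _⟩
    have := hν.le_of_mem_addColumn hx
    omega

lemma toDistinct_toPartition {l : List ℕ} (hl : IsDistinctPartition l) :
    toDistinct (toPartition l) = l := by
  induction l using toPartition.induct with
  | case1 => simp [toPartition, toDistinct]
  | case2 a => simp [toPartition, toDistinct]
  | case3 a b l ih =>
    obtain ⟨-, hab, hbl⟩ := isDistinctPartition_cons_iff.1 hl
    have hl' := (isDistinctPartition_cons_iff.1 hbl).2.2
    obtain ⟨hb, hfit⟩ := toPartition_fits hbl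
    have := hab b mem_cons_self
    have hlen := length_addColumn hfit
    rw [toPartition, toDistinct, if_neg (by rw [← length_eq_zero_iff, hlen]; omega), hlen,
      dropColumn_addColumn (isPartition_toPartition hl').2, ih hl']
    congr 2 <;> omega

lemma headI_toDistinct (μ : List ℕ) : (toDistinct μ).headI = μ.headI + μ.length - 1 := by
  cases μ with
  | nil => simp [toDistinct]
  | cons c m =>
    rw [toDistinct]
    split_ifs with hm
    · simp [hm]
    · simp only [headI_cons, length_cons]
      omega

lemma isDistinctPartition_toDistinct {μ : List ℕ} (hμ : IsPartition μ) :
    IsDistinctPartition (toDistinct μ) := by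
  induction μ using toDistinct.induct with
  | case1 => simp [toDistinct, IsDistinctPartition]
  | case2 c => simpa [toDistinct, IsPartition, IsDistinctPartition] using hμ
  | case3 c m hm ih =>
    obtain ⟨hc, -, hm'⟩ := isPartition_cons_iff.1 hμ
    have hmc := hμ.headI_tail_le
    have hD := ih (isPartition_dropColumn hm'.1)
    have hbound : ∀ x ∈ toDistinct (dropColumn m),
        x ≤ (dropColumn m).headI + (dropColumn m).length - 1 :=
      fun x hx => headI_toDistinct _ ▸ hD.isPartition.le_headI hx
    have := headI_dropColumn m
    have := length_dropColumn_le m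
    have := length_pos_iff.2 hm
    rw [toDistinct, if_neg hm]
    refine isDistinctPartition_cons_iff.2 ⟨by omega, fun x hx => ?_,
      isDistinctPartition_cons_iff.2 ⟨by omega, fun x hx => ?_, hD⟩⟩
    · rcases mem_cons.1 hx with rfl | hx
      · omega
      · have := hbound x hx
        omega
    · have := hbound x hx
      omega

lemma toPartition_toDistinct {μ : List ℕ} (hμ : IsPartition μ) :
    toPartition (toDistinct μ) = μ := by
  induction μ using toDistinct.induct with
  | case1 => simp [toPartition, toDistinct]
  | case2 c => simp [toPartition, toDistinct]
  | case3 c m hm ih =>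
    have hm' := (isPartition_cons_iff.1 hμ).2.2
    have hmc := hμ.headI_tail_le
    have := headI_dropColumn m
    rw [toDistinct, if_neg hm, toPartition, ih (isPartition_dropColumn hm'.1),
      Nat.add_sub_cancel, addColumn_dropColumn hm']
    congr 1
    omega

def distinctPartitionEquiv (n : ℕ) :
    {l : List ℕ // IsDistinctPartition l ∧ Osum l = n} ≃
      {l : List ℕ // IsPartition l ∧ l.sum = n} where
  toFun l := ⟨toPartition l, isPartition_toPartition l.2.1, (sum_toPartition l.2.1).trans l.2.2⟩
  invFun μ := ⟨toDistinct μ, isDistinctPartition_toDistinct μ.2.1, by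
    rw [← sum_toPartition (isDistinctPartition_toDistinct μ.2.1), toPartition_toDistinct μ.2.1]
    exact μ.2.2⟩
  left_inv l := Subtype.ext (toDistinct_toPartition l.2.1)
  right_inv μ := Subtype.ext (toPartition_toDistinct μ.2.1)

/-- **Schmidt's problem.** The number of partitions into distinct parts with odd-indexed
parts summing to `n` equals the number of ordinary partitions of `n`. -/
theorem schmidt_problem (n : ℕ) :
    Nat.card {l : List ℕ // IsDistinctPartition l ∧ Osum l = n} =
      Nat.card {l : List ℕ // IsPartition l ∧ l.sum = n} :=
  Nat.card_congr (distinctPartitionEquiv n)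
end

section
/- For every nonnegative integer n, the number of (ordinary) partitions π = (λ1, λ2, …) with O(π) = n equals the number of 2-color partitions of n, i.e., the number of ordered pairs (ρ, σ) of partitions with |ρ| + |σ| = n. (Note that the set of partitions with O(π) = n is finite: all parts are ≤ n and the number of parts is at most 2n + 1.) -/
/-!
Conjugation exchanges rows and columns of the Young diagram, so the cells in the odd-indexed
rows `λ₁, λ₃, …` of `π` are the cells at odd heights in the columns of the conjugate `π'`.
Counting them column by column gives `O(π) = ∑ ⌈μⱼ / 2⌉` over the parts `μⱼ` of `π'`.
A partition of `⌈·/2⌉`-weight `n` is a 2-color partition of `n` in disguise: an even part `2a`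
is a red part `a`, an odd part `2b - 1` a green part `b`.
-/

open Finset

theorem sumAlt_map_range (g f : ℕ → ℕ) (k : ℕ) :
    sumAlt g ((List.range k).map f) = ∑ i ∈ range k, if Even i then g (f i) else 0 := by
  induction k using Nat.strong_induction_on generalizing f with
  | _ k ih =>
    match k with
    | 0 => simp [sumAlt]
    | 1 => simp [sumAlt]
    | k + 2 =>
      have hrange : (List.range (k + 2)).map f =
          f 0 :: f 1 :: (List.range k).map (fun i => f (i + 2)) := by
        simp [List.range_succ_eq_map, List.map_map, Function.comp_def]
      rw [hrange, sumAlt, ih k (by omega), sum_range_succ', sum_range_succ']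
      simp [Nat.even_add_one, add_comm (g (f 0))]

theorem card_filter_even_range (m : ℕ) : #{j ∈ range m | Even j} = (m + 1) / 2 := by
  induction m with
  | zero => rfl
  | succ m ih =>
    rw [range_add_one, filter_insert]
    split_ifs with hm
    · rw [card_insert_of_notMem (by simp), ih]
      obtain ⟨r, rfl⟩ := hm
      omega
    · obtain ⟨r, rfl⟩ := Nat.not_even_iff_odd.mp hm
      rw [ih]
      omega

namespace YoungDiagram

theorem card_filter_cells (μ : YoungDiagram) (p : ℕ × ℕ → Prop) [DecidablePred p] :
    #{c ∈ μ.cells | p c} = ∑ i ∈ range (μ.colLen 0), #{j ∈ range (μ.rowLen i) | p (i, j)} := by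
  rw [card_eq_sum_card_fiberwise (f := Prod.fst) (t := range (μ.colLen 0))]
  · refine sum_congr rfl fun i _ => ?_
    refine card_nbij' Prod.snd (fun j => (i, j)) ?_ ?_ ?_ ?_ <;>
      · intro c
        aesop (add simp mem_iff_lt_rowLen)
  · intro c hc
    simp only [coe_filter, Set.mem_ofPred_eq, mem_cells] at hc
    simpa [← mem_iff_lt_colLen] using μ.up_left_mem le_rfl (Nat.zero_le c.2) hc.1

theorem card_filter_cells_transpose (μ : YoungDiagram) (p : ℕ × ℕ → Prop) [DecidablePred p] :
    #{c ∈ μ.transpose.cells | p c} = #{c ∈ μ.cells | p c.swap} := by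
  simp only [transpose, Equiv.finsetCongr_apply, filter_map, card_map]
  rfl

theorem osum_rowLens (μ : YoungDiagram) : Osum μ.rowLens = #{c ∈ μ.cells | Even c.1} := by
  rw [card_filter_cells, Osum, rowLens, sumAlt_map_range]
  refine sum_congr rfl fun i _ => ?_
  split_ifs <;> simp [*]

theorem sum_map_ceilHalf_rowLens (μ : YoungDiagram) :
    (μ.rowLens.map fun x => (x + 1) / 2).sum = #{c ∈ μ.cells | Even c.2} := by
  simp only [card_filter_cells, rowLens, card_filter_even_range, List.map_map, Function.comp_def]
  rfl

theorem osum_rowLens_transpose (μ : YoungDiagram) :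
    Osum μ.transpose.rowLens = (μ.rowLens.map fun x => (x + 1) / 2).sum := by
  rw [osum_rowLens, card_filter_cells_transpose, sum_map_ceilHalf_rowLens]
  rfl

end YoungDiagram

theorem isPartition_iff_sortedGE {l : List ℕ} :
    IsPartition l ↔ l.SortedGE ∧ ∀ x ∈ l, 0 < x := by
  rw [IsPartition, List.sortedGE_iff_pairwise]

def partitionEquivYoungDiagram (P : List ℕ → Prop) :
    {l : List ℕ // IsPartition l ∧ P l} ≃ {μ : YoungDiagram // P μ.rowLens} :=
  (Equiv.subtypeEquivRight fun _ => and_congr_left' isPartition_iff_sortedGE).trans <|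
    (Equiv.subtypeSubtypeEquivSubtypeInter _ P).symm.trans
      (Equiv.subtypeEquiv YoungDiagram.equivListRowLens fun _ => Iff.rfl).symm

def conjugateEquiv (n : ℕ) : {l : List ℕ // IsPartition l ∧ Osum l = n} ≃
    {l : List ℕ // IsPartition l ∧ (l.map fun x => (x + 1) / 2).sum = n} :=
  (partitionEquivYoungDiagram _).trans <|
    (Equiv.subtypeEquiv YoungDiagram.transposeOrderIso.toEquiv fun μ => by
      rw [← YoungDiagram.osum_rowLens_transpose]
      simp [YoungDiagram.transposeOrderIso]).trans
    (partitionEquivYoungDiagram _).symm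

theorem Multiset.map_eq_self_of_forall {α : Type*} {s : Multiset α} {f : α → α}
    (h : ∀ x ∈ s, f x = x) : s.map f = s :=
  (Multiset.map_congr rfl h).trans s.map_id'

theorem Multiset.sort_ge_coe {α : Type*} [LinearOrder α] {l : List α}
    (hl : l.Pairwise (· ≥ ·)) : (l : Multiset α).sort (· ≥ ·) = l :=
  List.mergeSort_eq_self _ (by simpa using hl)

abbrev PositiveMultiset : Type := {M : Multiset ℕ // ∀ x ∈ M, 0 < x}

def partitionEquivPositiveMultiset : {l : List ℕ // IsPartition l} ≃ PositiveMultiset where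
  toFun l := ⟨l.1, l.2.2⟩
  invFun M := ⟨M.1.sort (· ≥ ·), M.1.pairwise_sort _, fun x hx => M.2 x (by simpa using hx)⟩
  left_inv l := Subtype.ext (Multiset.sort_ge_coe l.2.1)
  right_inv M := Subtype.ext (M.1.sort_eq _)

def partitionSubtypeEquiv (P : Multiset ℕ → Prop) :
    {l : List ℕ // IsPartition l ∧ P l} ≃ {M : PositiveMultiset // P M} :=
  (Equiv.subtypeSubtypeEquivSubtypeInter IsPartition fun l => P l).symm.trans
    (Equiv.subtypeEquiv partitionEquivPositiveMultiset fun _ => Iff.rfl)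

def partitionPairSubtypeEquiv (P : Multiset ℕ → Multiset ℕ → Prop) :
    {p : List ℕ × List ℕ // IsPartition p.1 ∧ IsPartition p.2 ∧ P p.1 p.2} ≃
      {q : PositiveMultiset × PositiveMultiset // P q.1 q.2} :=
  (Equiv.subtypeEquivRight fun _ => and_assoc.symm).trans <|
    (Equiv.subtypeSubtypeEquivSubtypeInter _ fun p => P p.1 p.2).symm.trans <|
      Equiv.subtypeEquiv (Equiv.subtypeProdEquivProd.trans
        (partitionEquivPositiveMultiset.prodCongr partitionEquivPositiveMultiset)) fun _ => Iff.rfl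

def evenOddMerge (A B : Multiset ℕ) : Multiset ℕ := A.map (2 * ·) + B.map (2 * · - 1)

section evenOddMerge

variable {A B : Multiset ℕ}

theorem pos_of_mem_evenOddMerge (hA : ∀ a ∈ A, 0 < a) (hB : ∀ b ∈ B, 0 < b) :
    ∀ x ∈ evenOddMerge A B, 0 < x := by
  simp only [evenOddMerge, Multiset.mem_add, Multiset.mem_map]
  rintro _ (⟨a, ha, rfl⟩ | ⟨b, hb, rfl⟩)
  · exact Nat.mul_pos two_pos (hA a ha)
  · have := hB b hb
    omega

theorem filter_even_evenOddMerge (hB : ∀ b ∈ B, 0 < b) :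
    (evenOddMerge A B).filter Even = A.map (2 * ·) := by
  have hB' : B.filter (fun b => Even (2 * b - 1)) = 0 :=
    Multiset.filter_eq_nil.mpr fun b hb => by
      have := hB b hb
      rw [Nat.even_iff]
      omega
  simp only [evenOddMerge, Multiset.filter_add, Multiset.filter_map, Function.comp_def, hB',
    Multiset.map_zero, add_zero]
  rw [Multiset.filter_eq_self.mpr fun a _ => even_two_mul a]

theorem filter_not_even_evenOddMerge (hB : ∀ b ∈ B, 0 < b) :
    (evenOddMerge A B).filter (¬Even ·) = B.map (2 * · - 1) := by
  have hB' : B.filter (fun b => ¬Even (2 * b - 1)) = B :=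
    Multiset.filter_eq_self.mpr fun b hb => by
      have := hB b hb
      rw [Nat.even_iff]
      omega
  simp only [evenOddMerge, Multiset.filter_add, Multiset.filter_map, Function.comp_def, hB']
  rw [Multiset.filter_eq_nil.mpr fun a _ => not_not.mpr (even_two_mul a), Multiset.map_zero,
    zero_add]

theorem sum_map_ceilHalf_evenOddMerge (hB : ∀ b ∈ B, 0 < b) :
    ((evenOddMerge A B).map fun x => (x + 1) / 2).sum = A.sum + B.sum := by
  simp only [evenOddMerge, Multiset.map_add, Multiset.map_map, Function.comp_def,
    Multiset.sum_add]
  rw [Multiset.map_eq_self_of_forall fun a _ => by omega,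
    Multiset.map_eq_self_of_forall fun b hb => by have := hB b hb; omega]

end evenOddMerge

def evenOddEquiv : PositiveMultiset × PositiveMultiset ≃ PositiveMultiset where
  toFun p := ⟨evenOddMerge p.1 p.2, pos_of_mem_evenOddMerge p.1.2 p.2.2⟩
  invFun N := (⟨(N.1.filter Even).map (· / 2), by
      simp only [Multiset.mem_map, Multiset.mem_filter]
      rintro _ ⟨x, ⟨hx, r, rfl⟩, rfl⟩
      have := N.2 _ hx
      omega⟩,
    ⟨(N.1.filter (¬Even ·)).map (fun x => (x + 1) / 2), by
      simp only [Multiset.mem_map, Multiset.mem_filter]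
      rintro _ ⟨x, ⟨hx, -⟩, rfl⟩
      have := N.2 _ hx
      omega⟩)
  left_inv := by
    rintro ⟨⟨A, -⟩, ⟨B, hB⟩⟩
    refine Prod.ext (Subtype.ext ?_) (Subtype.ext ?_)
    · simp [filter_even_evenOddMerge hB, Multiset.map_map]
    · simp only [filter_not_even_evenOddMerge hB, Multiset.map_map, Function.comp_def]
      exact Multiset.map_eq_self_of_forall fun b hb => by have := hB b hb; omega
  right_inv := by
    rintro ⟨N, -⟩
    refine Subtype.ext ?_
    simp only [evenOddMerge, Multiset.map_map, Function.comp_def]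
    conv_rhs => rw [← Multiset.filter_add_not Even N]
    congr 1 <;> refine Multiset.map_eq_self_of_forall fun x hx => ?_
    · obtain ⟨-, r, rfl⟩ := Multiset.mem_filter.mp hx
      omega
    · obtain ⟨r, rfl⟩ := Nat.not_even_iff_odd.mp (Multiset.mem_filter.mp hx).2
      omega

/-- **Uncu–Andrews–Paule theorem.** The number of partitions `π` with `O(π) = n` equals
the number of 2-color partitions of `n`, i.e. ordered pairs `(ρ, σ)` of partitions with
`|ρ| + |σ| = n`. -/
theorem uncu_andrews_paule (n : ℕ) :
    Nat.card {l : List ℕ // IsPartition l ∧ Osum l = n} =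
      Nat.card {p : List ℕ × List ℕ //
        IsPartition p.1 ∧ IsPartition p.2 ∧ p.1.sum + p.2.sum = n} :=
  Nat.card_congr <| (conjugateEquiv n).trans <|
    (partitionSubtypeEquiv fun M => (M.map fun x => (x + 1) / 2).sum = n).trans <|
      (Equiv.subtypeEquiv evenOddEquiv fun p => by
          rw [← sum_map_ceilHalf_evenOddMerge p.2.2]
          rfl).symm.trans
        (partitionPairSubtypeEquiv fun A B => A.sum + B.sum = n).symm
end

section
/- For all nonnegative integers n and j, the number of partitions π into distinct parts with E(π) = n and γ(π) = j equals the number of partitions of n into parts each at most j. (The left-hand set is finite: for such π the largest part satisfies λ1 ≤ j + n.) -/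
open List

lemma esum_cons (a : ℕ) (l : List ℕ) : Esum (a :: l) = Osum l := rfl

lemma osum_cons (a : ℕ) (l : List ℕ) : Osum (a :: l) = a + Esum l := by
  cases l <;> rfl

lemma esum_cons_cons (a b : ℕ) (l : List ℕ) : Esum (a :: b :: l) = b + Esum l :=
  osum_cons b l

lemma esum_le_osum : ∀ {l : List ℕ}, l.Pairwise (· ≥ ·) → Esum l ≤ Osum l
  | [], _ | [_], _ => by simp [Esum, Osum, sumAlt]
  | a :: b :: l, h => by
    have hab : b ≤ a := rel_of_pairwise_cons h mem_cons_self
    have ih := esum_le_osum h.of_cons.of_cons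
    rw [esum_cons, osum_cons, osum_cons, esum_cons]
    omega

lemma gammaSum_nil : gammaSum [] = 0 := rfl

lemma gammaSum_singleton (a : ℕ) : gammaSum [a] = a := rfl

lemma gammaSum_cons_cons {a b : ℕ} {l : List ℕ} (hab : b ≤ a) (hl : l.Pairwise (· ≥ ·)) :
    gammaSum (a :: b :: l) = a - b + gammaSum l := by
  have := esum_le_osum hl
  simp only [gammaSum, osum_cons, esum_cons]
  omega

lemma isDistinctPartition_cons_iff_s3 {a : ℕ} {l : List ℕ} :
    IsDistinctPartition (a :: l) ↔ IsDistinctPartition l ∧ l.headD 0 < a := by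
  cases l with
  | nil => simp [IsDistinctPartition]
  | cons b l =>
    simp only [IsDistinctPartition, pairwise_cons_cons_iff_of_trans, forall_mem_cons, headD_cons]
    constructor
    · rintro ⟨⟨hab, hl⟩, -, hpos⟩
      exact ⟨⟨hl, hpos⟩, hab⟩
    · rintro ⟨⟨hl, hpos⟩, hab⟩
      exact ⟨⟨hab, hl⟩, by omega, hpos⟩

lemma isDistinctPartition_cons_cons_iff {a b : ℕ} {l : List ℕ} :
    IsDistinctPartition (a :: b :: l) ↔ IsDistinctPartition l ∧ l.headD 0 < b ∧ b < a := by
  rw [isDistinctPartition_cons_iff_s3, isDistinctPartition_cons_iff_s3, and_assoc, headD_cons]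

lemma IsDistinctPartition.pairwise_ge {l : List ℕ} (hl : IsDistinctPartition l) :
    l.Pairwise (· ≥ ·) :=
  hl.1.imp le_of_lt

lemma IsPartition.of_cons {a : ℕ} {l : List ℕ} (h : IsPartition (a :: l)) : IsPartition l :=
  ⟨h.1.of_cons, fun x hx => h.2 x (mem_cons_of_mem a hx)⟩

lemma isPartition_cons_map_succ_append_replicate {h e : ℕ} {ν : List ℕ} (hh : 0 < h)
    (hν : ν.Pairwise (· ≥ ·)) (hνh : ∀ x ∈ ν, x < h) :
    IsPartition (h :: (ν.map (· + 1) ++ replicate e 1)) := by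
  simp only [IsPartition, pairwise_cons, pairwise_append, pairwise_map, forall_mem_cons,
    mem_append, mem_map, mem_replicate]
  refine ⟨⟨?_, hν.imp (by omega), pairwise_replicate_of_refl, ?_⟩, hh, ?_⟩
  · rintro _ (⟨x, hx, rfl⟩ | ⟨-, rfl⟩)
    · exact hνh x hx
    · exact hh
  · rintro _ ⟨x, -, rfl⟩ _ ⟨-, rfl⟩
    omega
  · rintro _ (⟨x, -, rfl⟩ | ⟨-, rfl⟩) <;> omega

lemma IsPartition.exists_eq_map_succ_append_replicate {l : List ℕ} (hl : IsPartition l) :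
    ∃ (ν : List ℕ) (e : ℕ), IsPartition ν ∧ l = ν.map (· + 1) ++ replicate e 1 := by
  induction l with
  | nil => exact ⟨[], 0, ⟨.nil, by simp⟩, rfl⟩
  | cons x l ih =>
    obtain ⟨ν, e, hν, rfl⟩ := ih hl.of_cons
    have hx : 1 ≤ x := hl.2 x mem_cons_self
    have hge : ∀ y ∈ ν, y + 1 ≤ x := fun y hy =>
      rel_of_pairwise_cons hl.1 (mem_append_left _ (mem_map_of_mem hy))
    rcases hx.lt_or_eq with hx1 | rfl
    · refine ⟨(x - 1) :: ν, e, ⟨?_, ?_⟩, ?_⟩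
      · exact hν.1.cons fun y hy => by have := hge y hy; omega
      · exact forall_mem_cons.2 ⟨by omega, hν.2⟩
      · rw [map_cons, Nat.sub_add_cancel hx]
        rfl
    · obtain rfl : ν = [] := eq_nil_iff_forall_not_mem.2 fun y hy => by
        have := hge y hy
        have := hν.2 y hy
        omega
      exact ⟨[], e + 1, ⟨.nil, by simp⟩, rfl⟩

lemma map_succ_append_replicate_one_inj {ν ν' : List ℕ} {e e' : ℕ} (hν : ∀ x ∈ ν, 0 < x)
    (hν' : ∀ x ∈ ν', 0 < x)
    (h : ν.map (· + 1) ++ replicate e 1 = ν'.map (· + 1) ++ replicate e' 1) :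
    ν = ν' ∧ e = e' := by
  have hfilter (μ : List ℕ) (k : ℕ) (hμ : ∀ x ∈ μ, 0 < x) :
      (μ.map (· + 1) ++ replicate k 1).filter (2 ≤ ·) = μ.map (· + 1) := by
    rw [filter_append, filter_map,
      filter_eq_self.2 fun x hx => by simpa using Nat.one_le_of_lt (hμ x hx)]
    simp
  have hcount (μ : List ℕ) (k : ℕ) (hμ : ∀ x ∈ μ, 0 < x) :
      (μ.map (· + 1) ++ replicate k 1).count 1 = k := by
    simpa [count_append, count_eq_zero] using fun h0 => (hμ 0 h0).ne rfl
  refine ⟨map_injective_iff.2 (add_left_injective 1) ?_, ?_⟩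
  · rw [← hfilter ν e hν, ← hfilter ν' e' hν', h]
  · rw [← hcount ν e hν, ← hcount ν' e' hν', h]

def toBounded : List ℕ → List ℕ
  | [] | [_] => []
  | _ :: b :: l =>
      (gammaSum l + 1) :: ((toBounded l).map (· + 1) ++ replicate (b - l.headD 0 - 1) 1)

lemma gammaSum_add_length_toBounded {l : List ℕ} (hl : IsDistinctPartition l) :
    gammaSum l + (toBounded l).length = l.headD 0 := by
  induction l using toBounded.induct with
  | case1 => rfl
  | case2 a => rfl
  | case3 a b l ih =>
    obtain ⟨hl, hlb, hba⟩ := isDistinctPartition_cons_cons_iff.1 hl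
    have := ih hl
    rw [gammaSum_cons_cons hba.le hl.pairwise_ge, toBounded]
    simp only [length_cons, length_append, length_map, length_replicate, headD_cons]
    omega

lemma sum_toBounded {l : List ℕ} (hl : IsDistinctPartition l) : (toBounded l).sum = Esum l := by
  induction l using toBounded.induct with
  | case1 => rfl
  | case2 a => rfl
  | case3 a b l ih =>
    obtain ⟨hl, hlb, -⟩ := isDistinctPartition_cons_cons_iff.1 hl
    have hlength := gammaSum_add_length_toBounded hl
    rw [toBounded, esum_cons_cons, sum_cons, sum_append, ← ih hl]
    simp only [sum_map_add, map_id_fun', id_eq, map_const', sum_replicate, smul_eq_mul, mul_one]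
    omega

lemma le_gammaSum_of_mem_toBounded {l : List ℕ} (hl : IsDistinctPartition l) :
    ∀ x ∈ toBounded l, x ≤ gammaSum l := by
  induction l using toBounded.induct with
  | case1 | case2 => simp [toBounded]
  | case3 a b l ih =>
    obtain ⟨hl, -, hba⟩ := isDistinctPartition_cons_cons_iff.1 hl
    rw [gammaSum_cons_cons hba.le hl.pairwise_ge, toBounded]
    simp only [mem_cons, mem_append, mem_map, mem_replicate]
    rintro _ (rfl | ⟨x, hx, rfl⟩ | ⟨-, rfl⟩)
    · omega
    · have := ih hl x hx
      omega
    · omega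

lemma isPartition_toBounded {l : List ℕ} (hl : IsDistinctPartition l) :
    IsPartition (toBounded l) := by
  induction l using toBounded.induct with
  | case1 | case2 => exact ⟨.nil, by simp [toBounded]⟩
  | case3 a b l ih =>
    obtain ⟨hl, -, -⟩ := isDistinctPartition_cons_cons_iff.1 hl
    exact isPartition_cons_map_succ_append_replicate (Nat.succ_pos _) (ih hl).1
      fun x hx => Nat.lt_succ_of_le (le_gammaSum_of_mem_toBounded hl x hx)

lemma eq_of_gammaSum_eq_of_toBounded_eq {l l' : List ℕ} (hl : IsDistinctPartition l)
    (hl' : IsDistinctPartition l') (hγ : gammaSum l = gammaSum l')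
    (h : toBounded l = toBounded l') : l = l' := by
  induction l using toBounded.induct generalizing l' with
  | case1 =>
    rcases l' with _ | ⟨a', _ | ⟨b', l'⟩⟩
    · rfl
    · have := hl'.2 a' mem_cons_self
      rw [gammaSum_nil, gammaSum_singleton] at hγ
      omega
    · simp [toBounded] at h
  | case2 a =>
    rcases l' with _ | ⟨a', _ | ⟨b', l'⟩⟩
    · have := hl.2 a mem_cons_self
      rw [gammaSum_nil, gammaSum_singleton] at hγ
      omega
    · rw [gammaSum_singleton, gammaSum_singleton] at hγ
      exact congrArg ([·]) hγ
    · simp [toBounded] at h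
  | case3 a b l ih =>
    rcases l' with _ | ⟨a', _ | ⟨b', l'⟩⟩
    · simp [toBounded] at h
    · simp [toBounded] at h
    obtain ⟨hl, hlb, hba⟩ := isDistinctPartition_cons_cons_iff.1 hl
    obtain ⟨hl', hlb', hba'⟩ := isDistinctPartition_cons_cons_iff.1 hl'
    simp only [toBounded, cons.injEq, Nat.add_right_cancel_iff] at h
    obtain ⟨hγl, htail⟩ := h
    obtain ⟨hrec, hones⟩ := map_succ_append_replicate_one_inj (isPartition_toBounded hl).2
      (isPartition_toBounded hl').2 htail
    obtain rfl := ih hl hl' hγl hrec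
    rw [gammaSum_cons_cons hba.le hl.pairwise_ge, gammaSum_cons_cons hba'.le hl.pairwise_ge] at hγ
    obtain rfl : b = b' := by omega
    obtain rfl : a = a' := by omega
    rfl

lemma exists_toBounded_eq : ∀ {μ : List ℕ} {j : ℕ}, IsPartition μ → (∀ x ∈ μ, x ≤ j) →
    ∃ l, IsDistinctPartition l ∧ gammaSum l = j ∧ toBounded l = μ
  | [], j, _, _ => by
    rcases Nat.eq_zero_or_pos j with rfl | hj
    · exact ⟨[], ⟨.nil, by simp⟩, rfl, rfl⟩
    · exact ⟨[j], ⟨pairwise_singleton _ _, by simpa using hj⟩, rfl, rfl⟩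
  | h :: tl, j, hμ, hμj => by
    obtain ⟨ν, e, hν, htl⟩ := hμ.of_cons.exists_eq_map_succ_append_replicate
    subst htl
    have hh : 0 < h := hμ.2 h mem_cons_self
    have hhj : h ≤ j := hμj h mem_cons_self
    have hνh : ∀ x ∈ ν, x ≤ h - 1 := fun x hx => by
      have := rel_of_pairwise_cons hμ.1 (mem_append_left _ (mem_map_of_mem hx))
      omega
    obtain ⟨l, hl, hγ, rfl⟩ := exists_toBounded_eq hν hνh
    have hdist : IsDistinctPartition
        ((l.headD 0 + 1 + e + (j + 1 - h)) :: (l.headD 0 + 1 + e) :: l) :=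
      isDistinctPartition_cons_cons_iff.2 ⟨hl, by omega, by omega⟩
    refine ⟨_, hdist, ?_, ?_⟩
    · rw [gammaSum_cons_cons (by omega) hl.pairwise_ge]
      omega
    · rw [toBounded, hγ, Nat.sub_add_cancel hh]
      congr
      omega
  termination_by μ => μ.length
  decreasing_by simp only [htl, length_cons, length_append, length_map]; omega

/-- The number of partitions into distinct parts with `E(π) = n` and `γ(π) = j` equals
the number of partitions of `n` into parts each at most `j`. -/
theorem distinct_evenIndexed_eq_bounded_parts (n j : ℕ) :
    Nat.card {l : List ℕ // IsDistinctPartition l ∧ Esum l = n ∧ gammaSum l = j} =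
      Nat.card {l : List ℕ // IsPartition l ∧ l.sum = n ∧ ∀ x ∈ l, x ≤ j} := by
  refine Nat.card_eq_of_bijective (fun l => ⟨toBounded l.1, isPartition_toBounded l.2.1,
    (sum_toBounded l.2.1).trans l.2.2.1,
    fun x hx => l.2.2.2 ▸ le_gammaSum_of_mem_toBounded l.2.1 x hx⟩) ⟨?_, ?_⟩
  · intro ⟨l, hl, _, hγ⟩ ⟨l', hl', _, hγ'⟩ h
    exact Subtype.ext <|
      eq_of_gammaSum_eq_of_toBounded_eq hl hl' (hγ.trans hγ'.symm) (congrArg Subtype.val h)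
  · rintro ⟨μ, hμ, hsum, hμj⟩
    obtain ⟨l, hl, hγ, rfl⟩ := exists_toBounded_eq hμ hμj
    exact ⟨⟨l, hl, (sum_toBounded hl).symm.trans hsum, hγ⟩, rfl⟩
end

section
/- (Ishikawa–Zeng) Let N be a nonnegative integer and ν ∈ {0,1}. In the polynomial ring ℤ[a,b,c,d], writing Q = abcd, one has ∑_{π ∈ D_{≤ 2N+ν}} a^{⌈O⌉(π)} b^{⌊O⌋(π)} c^{⌈E⌉(π)} d^{⌊E⌋(π)} = ∑_{i=0}^{N} [N choose i]_Q · (−a; Q)_{N−i+ν} · (−c; Q)_i · (ab)^i, where the sum on the left runs over the (finitely many) partitions into distinct parts all ≤ 2N+ν. -/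
section QBinom

open Polynomial

@[simp] lemma qbinom_zero_right (n : ℕ) : qbinom n 0 = 1 := by
  cases n <;> rfl

lemma qbinom_succ_succ (n k : ℕ) :
    qbinom (n + 1) (k + 1) = qbinom n k + X ^ (k + 1) * qbinom n (k + 1) := rfl

lemma qbinom_eq_zero_of_lt : ∀ {n k : ℕ}, n < k → qbinom n k = 0
  | 0, _ + 1, _ => rfl
  | n + 1, k + 1, h => by
    rw [qbinom_succ_succ, qbinom_eq_zero_of_lt (by omega : n < k),
      qbinom_eq_zero_of_lt (by omega : n < k + 1)]
    ring

@[simp] lemma qbinom_self : ∀ n : ℕ, qbinom n n = 1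
  | 0 => rfl
  | n + 1 => by rw [qbinom_succ_succ, qbinom_self n, qbinom_eq_zero_of_lt n.lt_succ_self]; ring

lemma qbinom_succ_succ' (i k : ℕ) :
    qbinom (i + k + 1) (i + 1) = qbinom (i + k) (i + 1) + X ^ k * qbinom (i + k) i := by
  induction k generalizing i with
  | zero => simp [qbinom_eq_zero_of_lt]
  | succ k ihk =>
    induction i with
    | zero =>
      have ih := ihk 0
      have p₁ := qbinom_succ_succ (k + 1) 0
      have p₂ := qbinom_succ_succ k 0
      ring_nf at ih p₁ p₂ ⊢
      simp only [qbinom_zero_right] at ih p₁ p₂ ⊢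
      linear_combination p₁ + X * ih - p₂
    | succ i ihi =>
      have ih := ihk (i + 1)
      have p₁ := qbinom_succ_succ (i + k + 2) (i + 1)
      have p₂ := qbinom_succ_succ (i + k + 1) (i + 1)
      have p₃ := qbinom_succ_succ (i + k + 1) i
      ring_nf at ih ihi p₁ p₂ p₃ ⊢
      linear_combination p₁ + ihi + X ^ (i + 2) * ih - p₂ - X ^ (k + 1) * p₃

lemma qbinom_symm_add (i k : ℕ) : qbinom (i + k) i = qbinom (i + k) k := by
  induction i generalizing k with
  | zero => simp
  | succ i ihi =>
    induction k with
    | zero => simp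
    | succ k ihk =>
      have h := ihi (k + 1)
      have d := qbinom_succ_succ' i (k + 1)
      have p := qbinom_succ_succ (i + k + 1) k
      ring_nf at ihk h d p ⊢
      linear_combination d - p + ihk + X ^ (k + 1) * h

end QBinom

lemma sumAlt_cons (f : ℕ → ℕ) (a : ℕ) (l : List ℕ) :
    sumAlt f (a :: l) = f a + sumAlt f l.tail := by
  cases l <;> simp [sumAlt]

def distinctPartsLE (M : ℕ) : Set (List ℕ) := {l | IsDistinctPartition l ∧ ∀ x ∈ l, x ≤ M}

lemma distinctPartsLE_zero : distinctPartsLE 0 = {[]} := by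
  ext (_ | ⟨a, l⟩)
  · simp [distinctPartsLE, IsDistinctPartition]
  · simp only [distinctPartsLE, IsDistinctPartition, Set.mem_ofPred_eq, Set.mem_singleton_iff,
      reduceCtorEq, iff_false]
    rintro ⟨⟨-, hpos⟩, hle⟩
    exact (hpos a List.mem_cons_self).ne' (Nat.le_zero.mp (hle a List.mem_cons_self))

lemma distinctPartsLE_succ (M : ℕ) :
    distinctPartsLE (M + 1) =
      distinctPartsLE M ∪ List.cons (M + 1) '' distinctPartsLE M := by
  ext (_ | ⟨a, l⟩)
  · simp [distinctPartsLE, IsDistinctPartition]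
  · simp only [distinctPartsLE, IsDistinctPartition, Set.mem_union, Set.mem_ofPred_eq,
      Set.mem_image, List.cons.injEq, List.pairwise_cons, List.mem_cons, forall_eq_or_imp]
    constructor
    · rintro ⟨⟨⟨hgt, hl⟩, ha, hpos⟩, haM, -⟩
      rcases Nat.lt_or_eq_of_le haM with haM | rfl
      · exact Or.inl ⟨⟨⟨hgt, hl⟩, ha, hpos⟩, by omega, fun x hx => by have := hgt x hx; omega⟩
      · exact Or.inr ⟨l, ⟨⟨hl, hpos⟩, fun x hx => by have := hgt x hx; omega⟩, rfl, rfl⟩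
    · rintro (⟨⟨⟨hgt, hl⟩, ha, hpos⟩, haM, hle⟩ | ⟨l, ⟨⟨hl, hpos⟩, hle⟩, rfl, rfl⟩)
      · exact ⟨⟨⟨hgt, hl⟩, ha, hpos⟩, by omega, fun x hx => by have := hle x hx; omega⟩
      · exact ⟨⟨⟨fun x hx => by have := hle x hx; omega, hl⟩, by omega, hpos⟩, le_rfl,
          fun x hx => by have := hle x hx; omega⟩

lemma finite_distinctPartsLE (M : ℕ) : (distinctPartsLE M).Finite := by
  induction M with
  | zero => simp [distinctPartsLE_zero]
  | succ M ih => rw [distinctPartsLE_succ]; exact ih.union (ih.image _)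

lemma disjoint_distinctPartsLE_image_cons (M : ℕ) :
    Disjoint (distinctPartsLE M) (List.cons (M + 1) '' distinctPartsLE M) := by
  rw [Set.disjoint_right]
  rintro _ ⟨l, -, rfl⟩ ⟨-, hle⟩
  exact absurd (hle (M + 1) List.mem_cons_self) (by omega)

open MvPolynomial

section Boulet

variable {R : Type*} [CommSemiring R]

noncomputable def bouletWeight (l : List ℕ) : MvPolynomial (Fin 4) R :=
  X 0 ^ ceilO l * X 1 ^ floorO l * X 2 ^ ceilE l * X 3 ^ floorE l

noncomputable def rowSwap : MvPolynomial (Fin 4) R →ₐ[R] MvPolynomial (Fin 4) R :=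
  rename ![2, 3, 0, 1]

@[simp] lemma rowSwap_X_zero : rowSwap (X 0 : MvPolynomial (Fin 4) R) = X 2 := by
  simp [rowSwap]

@[simp] lemma rowSwap_X_one : rowSwap (X 1 : MvPolynomial (Fin 4) R) = X 3 := by
  simp [rowSwap]

@[simp] lemma rowSwap_X_two : rowSwap (X 2 : MvPolynomial (Fin 4) R) = X 0 := by
  simp [rowSwap]

@[simp] lemma rowSwap_X_three : rowSwap (X 3 : MvPolynomial (Fin 4) R) = X 1 := by
  simp [rowSwap]

lemma bouletWeight_nil : bouletWeight [] = (1 : MvPolynomial (Fin 4) R) := by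
  simp [bouletWeight, ceilO, floorO, ceilE, floorE, sumAlt]

lemma bouletWeight_cons (a : ℕ) (l : List ℕ) :
    (bouletWeight (a :: l) : MvPolynomial (Fin 4) R) =
      X 0 ^ ((a + 1) / 2) * X 1 ^ (a / 2) * rowSwap (bouletWeight l) := by
  simp only [bouletWeight, ceilO, floorO, ceilE, floorE, sumAlt_cons, List.tail_cons, map_mul,
    map_pow, rowSwap_X_zero, rowSwap_X_one, rowSwap_X_two, rowSwap_X_three, pow_add]
  ring

noncomputable def bouletGF (M : ℕ) : MvPolynomial (Fin 4) R :=
  ∑ᶠ l ∈ distinctPartsLE M, bouletWeight l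

lemma bouletGF_zero : bouletGF 0 = (1 : MvPolynomial (Fin 4) R) := by
  rw [bouletGF, distinctPartsLE_zero, finsum_mem_singleton, bouletWeight_nil]

lemma bouletGF_succ (M : ℕ) :
    (bouletGF (M + 1) : MvPolynomial (Fin 4) R) =
      bouletGF M + X 0 ^ ((M + 2) / 2) * X 1 ^ ((M + 1) / 2) * rowSwap (bouletGF M) := by
  have hfin := finite_distinctPartsLE M
  rw [bouletGF, distinctPartsLE_succ, finsum_mem_union (disjoint_distinctPartsLE_image_cons M)
    hfin (hfin.image _), finsum_mem_image List.cons_injective.injOn, bouletGF,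
    ← hfin.coe_toFinset, finsum_mem_coe_finset, finsum_mem_coe_finset, map_sum, Finset.mul_sum]
  simp only [bouletWeight_cons]

end Boulet

section IshikawaZengSum

open Finset Finset.Nat

local notation "Q" => (X 0 * X 1 * X 2 * X 3 : MvPolynomial (Fin 4) ℤ)

/-- `negPoch x m = (-x; Q)_m`. -/
noncomputable def negPoch (x : MvPolynomial (Fin 4) ℤ) (m : ℕ) : MvPolynomial (Fin 4) ℤ :=
  ∏ j ∈ range m, (1 + x * Q ^ j)

lemma negPoch_succ (x : MvPolynomial (Fin 4) ℤ) (m : ℕ) :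
    negPoch x (m + 1) = negPoch x m * (1 + x * Q ^ m) :=
  prod_range_succ _ _

lemma rowSwap_Q : rowSwap Q = Q := by
  simp only [map_mul, rowSwap_X_zero, rowSwap_X_one, rowSwap_X_two, rowSwap_X_three]
  ring

lemma rowSwap_aeval_Q (p : Polynomial ℤ) :
    rowSwap (Polynomial.aeval Q p) = Polynomial.aeval Q p := by
  rw [← Polynomial.aeval_algHom_apply, rowSwap_Q]

lemma rowSwap_negPoch (x : MvPolynomial (Fin 4) ℤ) (m : ℕ) :
    rowSwap (negPoch x m) = negPoch (rowSwap x) m := by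
  rw [negPoch, negPoch, map_prod]
  refine prod_congr rfl fun j _ => ?_
  rw [map_add, map_one, map_mul, map_pow, rowSwap_Q]

noncomputable def ishikawaZengSum (N ν : ℕ) : MvPolynomial (Fin 4) ℤ :=
  ∑ i ∈ range (N + 1), Polynomial.aeval Q (qbinom N i) * negPoch (X 0) (N - i + ν)
    * negPoch (X 2) i * (X 0 * X 1) ^ i

lemma ishikawaZengSum_eq_sum_antidiagonal (N ν : ℕ) :
    ishikawaZengSum N ν = ∑ p ∈ antidiagonal N, Polynomial.aeval Q (qbinom N p.1)
      * negPoch (X 0) (p.2 + ν) * negPoch (X 2) p.1 * (X 0 * X 1) ^ p.1 := by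
  rw [sum_antidiagonal_eq_sum_range_succ_mk]
  rfl

lemma rowSwap_ishikawaZengSum (N ν : ℕ) :
    rowSwap (ishikawaZengSum N ν) = ∑ p ∈ antidiagonal N, Polynomial.aeval Q (qbinom N p.1)
      * negPoch (X 0) p.2 * negPoch (X 2) (p.1 + ν) * (X 2 * X 3) ^ p.2 := by
  rw [ishikawaZengSum_eq_sum_antidiagonal, map_sum, ← sum_antidiagonal_swap]
  refine sum_congr rfl fun ⟨i, k⟩ hp => ?_
  obtain rfl : i + k = N := mem_antidiagonal.mp hp
  simp only [Prod.swap_prod_mk, map_mul, map_pow, rowSwap_aeval_Q, rowSwap_negPoch,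
    rowSwap_X_zero, rowSwap_X_one, rowSwap_X_two, ← qbinom_symm_add]
  ring

lemma ishikawaZengSum_one (N : ℕ) :
    ishikawaZengSum N 1 =
      ishikawaZengSum N 0 + X 0 ^ (N + 1) * X 1 ^ N * rowSwap (ishikawaZengSum N 0) := by
  rw [rowSwap_ishikawaZengSum, ishikawaZengSum_eq_sum_antidiagonal,
    ishikawaZengSum_eq_sum_antidiagonal, mul_sum, ← sum_add_distrib]
  refine sum_congr rfl fun ⟨i, k⟩ hp => ?_
  obtain rfl : i + k = N := mem_antidiagonal.mp hp
  simp only [negPoch_succ, add_zero]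
  ring

lemma ishikawaZengSum_succ_zero (N : ℕ) :
    ishikawaZengSum (N + 1) 0 =
      ishikawaZengSum N 1 + (X 0 * X 1) ^ (N + 1) * rowSwap (ishikawaZengSum N 1) := by
  have h₁ : ishikawaZengSum N 1 = negPoch (X 0) (N + 1) + ∑ p ∈ antidiagonal N,
      Polynomial.aeval Q (qbinom N (p.1 + 1)) * negPoch (X 0) p.2 * negPoch (X 2) (p.1 + 1)
        * (X 0 * X 1) ^ (p.1 + 1) := by
    calc ishikawaZengSum N 1 = ∑ p ∈ antidiagonal (N + 1), Polynomial.aeval Q (qbinom N p.1)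
          * negPoch (X 0) p.2 * negPoch (X 2) p.1 * (X 0 * X 1) ^ p.1 := by
          rw [sum_antidiagonal_succ', qbinom_eq_zero_of_lt N.lt_succ_self, map_zero, zero_mul,
            zero_mul, zero_mul, zero_add, ishikawaZengSum_eq_sum_antidiagonal]
      _ = _ := by
          rw [sum_antidiagonal_succ]
          simp [negPoch]
  have h₀ : ishikawaZengSum (N + 1) 0 = negPoch (X 0) (N + 1) + ∑ p ∈ antidiagonal N,
      Polynomial.aeval Q (qbinom (N + 1) (p.1 + 1)) * negPoch (X 0) p.2 * negPoch (X 2) (p.1 + 1)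
        * (X 0 * X 1) ^ (p.1 + 1) := by
    rw [ishikawaZengSum_eq_sum_antidiagonal, sum_antidiagonal_succ]
    simp [negPoch]
  rw [rowSwap_ishikawaZengSum, h₀, h₁, mul_sum, add_assoc, ← sum_add_distrib]
  congr 1
  refine sum_congr rfl fun ⟨i, k⟩ hp => ?_
  obtain rfl : i + k = N := mem_antidiagonal.mp hp
  simp only [qbinom_succ_succ', map_add, map_mul, map_pow, Polynomial.aeval_X]
  ring

end IshikawaZengSum

lemma ishikawaZengSum_div_two_succ (M : ℕ) :
    ishikawaZengSum ((M + 1) / 2) ((M + 1) % 2) = ishikawaZengSum (M / 2) (M % 2) +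
      X 0 ^ ((M + 2) / 2) * X 1 ^ ((M + 1) / 2) * rowSwap (ishikawaZengSum (M / 2) (M % 2)) := by
  rcases Nat.even_or_odd' M with ⟨N, rfl | rfl⟩
  · rw [show (2 * N + 1) / 2 = N by omega, show (2 * N + 1) % 2 = 1 by omega,
      show 2 * N / 2 = N by omega, show 2 * N % 2 = 0 by omega,
      show (2 * N + 2) / 2 = N + 1 by omega]
    exact ishikawaZengSum_one N
  · rw [show (2 * N + 1 + 1) / 2 = N + 1 by omega, show (2 * N + 1 + 1) % 2 = 0 by omega,
      show (2 * N + 1) / 2 = N by omega, show (2 * N + 1) % 2 = 1 by omega,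
      show (2 * N + 1 + 2) / 2 = N + 1 by omega, ← mul_pow]
    exact ishikawaZengSum_succ_zero N

lemma bouletGF_eq_ishikawaZengSum (M : ℕ) :
    bouletGF M = ishikawaZengSum (M / 2) (M % 2) := by
  induction M with
  | zero => simp [bouletGF_zero, ishikawaZengSum, negPoch]
  | succ M ih => rw [bouletGF_succ, ih, ishikawaZengSum_div_two_succ]

open MvPolynomial in
/-- **Ishikawa–Zeng.** In `ℤ[a,b,c,d]` (with `a = X 0`, `b = X 1`, `c = X 2`, `d = X 3` and
`Q = abcd`), the generating function of Boulet's 4-variable weight over partitions into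
distinct parts `≤ 2N + ν` equals
`∑_{i=0}^{N} [N choose i]_Q (−a;Q)_{N−i+ν} (−c;Q)_i (ab)^i`. -/
theorem ishikawa_zeng_psi (N ν : ℕ) (hν : ν = 0 ∨ ν = 1) :
    ∑ᶠ l ∈ {l : List ℕ | IsDistinctPartition l ∧ ∀ x ∈ l, x ≤ 2 * N + ν},
      (X 0 : MvPolynomial (Fin 4) ℤ) ^ ceilO l * X 1 ^ floorO l * X 2 ^ ceilE l * X 3 ^ floorE l
    = ∑ i ∈ Finset.range (N + 1),
        Polynomial.aeval (X 0 * X 1 * X 2 * X 3 : MvPolynomial (Fin 4) ℤ) (qbinom N i)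
          * (∏ j ∈ Finset.range (N - i + ν), (1 + X 0 * (X 0 * X 1 * X 2 * X 3) ^ j))
          * (∏ j ∈ Finset.range i, (1 + X 2 * (X 0 * X 1 * X 2 * X 3) ^ j))
          * (X 0 * X 1) ^ i := by
  have h := bouletGF_eq_ishikawaZengSum (2 * N + ν)
  rw [show (2 * N + ν) / 2 = N by omega, show (2 * N + ν) % 2 = ν by omega] at h
  exact h
end

section
/- For all nonnegative integers N and n, the number of partitions π with all parts ≤ N and O(π) = n equals the number of 2-color partitions (ρ, σ) of n (ρ red, σ green) such that the number of parts of ρ plus the largest part of σ is at most N. -/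
/-!
Write `d_j = λ_{j+1} - λ_{j+2}` (`j ≥ 0`) for the gaps of `π`, so that `λ_{i+1} = ∑_{j ≥ i} d_j`.
By Abel summation `λ_1 = ∑ d_j` and `O(π) = ∑ (⌊j/2⌋ + 1) d_j`, and a partition is determined by
its gaps, which form an arbitrary finitely supported sequence. Split the gaps of `π` by the parity
of `j`. The odd ones `d_{2k+1}` are the gaps of the green partition `σ`, so `|σ| = ∑ (k+1) d_{2k+1}`
and its largest part is `∑ d_{2k+1}`. The even ones `d_{2k}` are the gaps of the conjugate of the
red partition `ρ`, i.e. `ρ` has `d_{2k}` parts equal to `k + 1`, so `|ρ| = ∑ (k+1) d_{2k}` and `ρ`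
has `∑ d_{2k}` parts. Hence `|ρ| + |σ| = O(π)` and `#ρ + max σ = λ_1`.
-/

open Finset Finsupp

theorem List.Pairwise.forall_le_iff_headI_le {l : List ℕ} (hl : l.Pairwise (· ≥ ·)) (N : ℕ) :
    (∀ x ∈ l, x ≤ N) ↔ l.headI ≤ N := by
  cases l with
  | nil => simp
  | cons a t =>
    simp only [List.mem_cons, forall_eq_or_imp, List.headI_cons, and_iff_left_iff_imp]
    exact fun ha x hx => (List.rel_of_pairwise_cons hl hx).trans ha

theorem List.eq_of_getD_eq_of_pos {l l' : List ℕ} (hl : ∀ x ∈ l, 0 < x) (hl' : ∀ x ∈ l', 0 < x)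
    (h : ∀ i, l.getD i 0 = l'.getD i 0) : l = l' := by
  induction l generalizing l' with
  | nil =>
    cases l' with
    | nil => rfl
    | cons b t' => exact absurd (h 0) (hl' b (by simp)).ne
  | cons a t ih =>
    cases l' with
    | nil => exact absurd (h 0).symm (hl a (by simp)).ne
    | cons b t' =>
      have hab : a = b := h 0
      rw [hab, ih (fun x hx => hl x (by simp [hx])) (fun x hx => hl' x (by simp [hx]))
        (fun i => h (i + 1))]

theorem List.sum_range_getD (l : List ℕ) : ∑ j ∈ Finset.range l.length, l.getD j 0 = l.sum := by
  induction l with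
  | nil => rfl
  | cons a t ih => rw [length_cons, Finset.sum_range_succ', sum_cons, ← ih]; simp [add_comm]

theorem Osum_eq_sum_range (l : List ℕ) :
    Osum l = ∑ j ∈ range l.length, if Even j then l.getD j 0 else 0 := by
  induction l using sumAlt.induct with
  | case1 => rfl
  | case2 a => simp [Osum, sumAlt]
  | case3 a b t ih =>
    rw [Osum, sumAlt, ← Osum, ih, List.length_cons, List.length_cons, sum_range_succ',
      sum_range_succ']
    simp [Nat.even_add_one, add_comm a]

theorem sum_range_succ_ite_even (k : ℕ) :
    ∑ j ∈ range (k + 1), (if Even j then 1 else 0) = k / 2 + 1 := by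
  induction k with
  | zero => decide
  | succ k ih =>
    rw [sum_range_succ, ih]
    split_ifs with h <;> rw [Nat.even_iff] at h <;> omega

/-- The differences `λ_{j+1} - λ_{j+2}` of consecutive parts of `l = (λ_1, λ_2, …)`, which is
padded with zeros. -/
noncomputable def gaps (l : List ℕ) : ℕ →₀ ℕ :=
  onFinset (range l.length) (fun j => l.getD j 0 - l.getD (j + 1) 0) fun j hj => by
    by_contra h
    rw [List.getD_eq_default _ _ (not_lt.1 (mem_range.not.1 h)), zero_tsub] at hj
    exact hj rfl

@[simp]
theorem gaps_apply (l : List ℕ) (j : ℕ) : gaps l j = l.getD j 0 - l.getD (j + 1) 0 := rfl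

theorem gaps_cons_zero (a : ℕ) (t : List ℕ) : gaps (a :: t) 0 = a - t.getD 0 0 := rfl

theorem gaps_cons_succ (a : ℕ) (t : List ℕ) (j : ℕ) : gaps (a :: t) (j + 1) = gaps t j := rfl

theorem weight_gaps_eq_sum {M : Type*} [AddCommMonoid M] (w : ℕ → M) (l : List ℕ) :
    weight w (gaps l) = ∑ j ∈ range l.length, gaps l j • w j :=
  (weight_apply w _).trans (onFinset_sum _ fun _ => zero_smul _ _)

theorem getD_zero_le_of_pairwise_cons {a : ℕ} {t : List ℕ} (hl : (a :: t).Pairwise (· ≥ ·)) :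
    t.getD 0 0 ≤ a := by
  cases t with
  | nil => exact Nat.zero_le a
  | cons b u => exact List.rel_of_pairwise_cons hl (by simp)

theorem sum_range_gaps {l : List ℕ} (hl : l.Pairwise (· ≥ ·)) :
    ∑ j ∈ range l.length, gaps l j = l.getD 0 0 := by
  induction l with
  | nil => rfl
  | cons a t ih =>
    rw [List.length_cons, sum_range_succ', gaps_cons_zero]
    simp only [gaps_cons_succ, ih (List.pairwise_cons.1 hl).2, List.getD_cons_zero]
    have := getD_zero_le_of_pairwise_cons hl
    omega

/-- Abel summation: `∑ λ_{j+1} w_j = ∑ (λ_{k+1} - λ_{k+2}) (w_0 + ⋯ + w_k)`. -/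
theorem weight_gaps {l : List ℕ} (hl : l.Pairwise (· ≥ ·)) (w : ℕ → ℕ) :
    weight (fun k => ∑ j ∈ range (k + 1), w j) (gaps l) =
      ∑ j ∈ range l.length, w j * l.getD j 0 := by
  rw [weight_gaps_eq_sum]
  induction l generalizing w with
  | nil => rfl
  | cons a t ih =>
    have ht := (List.pairwise_cons.1 hl).2
    have hcum : ∀ k, ∑ j ∈ range (k + 1 + 1), w j = ∑ j ∈ range (k + 1), w (j + 1) + w 0 :=
      fun k => sum_range_succ' _ _
    rw [List.length_cons, sum_range_succ', sum_range_succ' (fun j => w j * (a :: t).getD j 0)]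
    simp only [gaps_cons_succ, gaps_cons_zero, List.getD_cons_succ, List.getD_cons_zero,
      smul_eq_mul, hcum, mul_add, sum_add_distrib, ← Finset.sum_mul, zero_add,
      sum_range_one] at ih ⊢
    rw [ih ht, sum_range_gaps ht, add_assoc, ← add_mul,
      Nat.add_sub_cancel' (getD_zero_le_of_pairwise_cons hl), mul_comm]

/-- `tailSum d i = ∑_{k ≥ i} d k`. -/
noncomputable def tailSum (d : ℕ →₀ ℕ) (i : ℕ) : ℕ :=
  weight (fun k => if i ≤ k then 1 else 0) d

theorem tailSum_gaps {l : List ℕ} (hl : l.Pairwise (· ≥ ·)) (i : ℕ) :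
    tailSum (gaps l) i = l.getD i 0 := by
  have h := weight_gaps hl (fun j => if j = i then 1 else 0)
  simp only [Finset.sum_ite_eq', mem_range, Nat.lt_succ_iff, ite_mul, one_mul, zero_mul] at h
  rw [tailSum, h]
  split_ifs with hi
  · rfl
  · exact (List.getD_eq_default _ _ (not_lt.1 hi)).symm

theorem tailSum_eq_add (d : ℕ →₀ ℕ) (i : ℕ) : tailSum d i = d i + tailSum d (i + 1) := by
  have h : ∀ k, (if i ≤ k then 1 else 0) =
      (if k = i then 1 else 0) + (if i + 1 ≤ k then 1 else 0) := fun k => by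
    split_ifs <;> omega
  simp only [tailSum, weight_apply, h, smul_eq_mul, mul_add, Finsupp.sum_add, mul_ite, mul_one,
    mul_zero, Finsupp.sum_ite_self_eq']

theorem tailSum_antitone (d : ℕ →₀ ℕ) : Antitone (tailSum d) :=
  antitone_nat_of_succ_le fun i => (tailSum_eq_add d i).symm ▸ Nat.le_add_left _ _

theorem tailSum_eq_zero {d : ℕ →₀ ℕ} {i : ℕ} (h : d.support.sup (· + 1) ≤ i) :
    tailSum d i = 0 := by
  rw [tailSum, weight_apply]
  refine Finset.sum_eq_zero fun k hk => ?_
  have : k + 1 ≤ d.support.sup (· + 1) := Finset.le_sup (f := (· + 1)) hk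
  dsimp only
  rw [if_neg (by omega), smul_zero]

theorem tailSum_pos {d : ℕ →₀ ℕ} {i : ℕ} (h : i < d.support.sup (· + 1)) : 0 < tailSum d i := by
  obtain ⟨k, hk, hik⟩ := Finset.lt_sup_iff.1 h
  calc 0 < d k := Nat.pos_of_ne_zero (Finsupp.mem_support_iff.1 hk)
    _ ≤ tailSum d k := (tailSum_eq_add d k).symm ▸ Nat.le_add_right _ _
    _ ≤ tailSum d i := tailSum_antitone d (Nat.lt_succ_iff.1 hik)

/-- The partition with parts `tailSum d 0 ≥ tailSum d 1 ≥ ⋯`, cut off where they vanish. -/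
noncomputable def ofGaps (d : ℕ →₀ ℕ) : List ℕ :=
  (List.range (d.support.sup (· + 1))).map (tailSum d)

theorem getD_ofGaps (d : ℕ →₀ ℕ) (i : ℕ) : (ofGaps d).getD i 0 = tailSum d i := by
  by_cases h : i < d.support.sup (· + 1)
  · simp [ofGaps, h]
  · simp [ofGaps, h, tailSum_eq_zero (not_lt.1 h)]

theorem isPartition_ofGaps (d : ℕ →₀ ℕ) : IsPartition (ofGaps d) := by
  refine ⟨List.pairwise_le_range.map _ fun _ _ h => tailSum_antitone d h, fun x hx => ?_⟩
  obtain ⟨i, hi, rfl⟩ := List.mem_map.1 hx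
  exact tailSum_pos (List.mem_range.1 hi)

theorem gaps_ofGaps (d : ℕ →₀ ℕ) : gaps (ofGaps d) = d := by
  ext j
  rw [gaps_apply, getD_ofGaps, getD_ofGaps, tailSum_eq_add d j, Nat.add_sub_cancel]

theorem ofGaps_gaps {l : List ℕ} (hl : IsPartition l) : ofGaps (gaps l) = l :=
  List.eq_of_getD_eq_of_pos (isPartition_ofGaps _).2 hl.2 fun i => by
    rw [getD_ofGaps, tailSum_gaps hl.1]

abbrev PartitionList : Type := {l : List ℕ // IsPartition l}

@[simps]
noncomputable def gapsEquiv : PartitionList ≃ (ℕ →₀ ℕ) where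
  toFun l := gaps l
  invFun d := ⟨ofGaps d, isPartition_ofGaps d⟩
  left_inv l := Subtype.ext (ofGaps_gaps l.2)
  right_inv := gaps_ofGaps

theorem degree_gaps {l : List ℕ} (hl : l.Pairwise (· ≥ ·)) : degree (gaps l) = l.headI := by
  have h := tailSum_gaps hl 0
  simp only [tailSum, zero_le, if_true] at h
  rw [degree_eq_weight_one, h]
  exact List.getI_zero_eq_headI l

theorem weight_succ_gaps {l : List ℕ} (hl : l.Pairwise (· ≥ ·)) :
    weight (· + 1) (gaps l) = l.sum := by
  have h := weight_gaps hl (fun _ => 1)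
  simp only [sum_const, card_range, smul_eq_mul, mul_one, one_mul] at h
  rw [h, List.sum_range_getD]

theorem weight_half_succ_gaps {l : List ℕ} (hl : l.Pairwise (· ≥ ·)) :
    weight (· / 2 + 1) (gaps l) = Osum l := by
  have h := weight_gaps hl (fun j => if Even j then 1 else 0)
  simp only [sum_range_succ_ite_even, ite_mul, one_mul, zero_mul] at h
  rw [h, Osum_eq_sum_range]

/-- Splits `f` into `(f (2 * i))ᵢ` and `(f (2 * i + 1))ᵢ`. -/
noncomputable def evenOddSplit {M : Type*} [AddCommMonoid M] :
    (ℕ →₀ M) ≃+ (ℕ →₀ M) × (ℕ →₀ M) :=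
  (Finsupp.domCongr Equiv.natSumNatEquivNat.symm).trans sumFinsuppAddEquivProdFinsupp

theorem weight_evenOddSplit {R M : Type*} [Semiring R] [AddCommMonoid M] [Module R M]
    (w : ℕ → M) (f : ℕ →₀ R) :
    weight w f = weight (fun i => w (2 * i)) (evenOddSplit f).1 +
      weight (fun i => w (2 * i + 1)) (evenOddSplit f).2 := by
  obtain ⟨g, rfl⟩ := evenOddSplit.symm.surjective f
  have : evenOddSplit.symm g = equivMapDomain Equiv.natSumNatEquivNat (g.1.sumElim g.2) := rfl
  rw [AddEquiv.apply_symm_apply, this, weight_apply, sum_equivMapDomain, Finsupp.sum_sumElim]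
  rfl

namespace YoungDiagram

theorem card_transpose (μ : YoungDiagram) : μ.transpose.card = μ.card := by
  simp [YoungDiagram.card, transpose]

theorem sum_rowLens (μ : YoungDiagram) : μ.rowLens.sum = μ.card := by
  have hfst : ∀ c ∈ μ.cells, c.1 ∈ range (μ.colLen 0) := fun c hc => by
    rw [mem_range, ← mem_iff_lt_colLen]
    exact μ.up_left_mem le_rfl (Nat.zero_le _) hc
  rw [YoungDiagram.card, card_eq_sum_card_fiberwise hfst, rowLens,
    ← List.sum_toFinset _ List.nodup_range, List.toFinset_range]
  exact sum_congr rfl fun i _ => μ.rowLen_eq_card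

theorem headI_rowLens (μ : YoungDiagram) : μ.rowLens.headI = μ.rowLen 0 := by
  cases h : μ.colLen 0 with
  | zero =>
    have : (0, 0) ∉ μ := by rw [mem_iff_lt_colLen, h]; exact lt_irrefl 0
    rw [mem_iff_lt_rowLen, not_lt, Nat.le_zero] at this
    simp [rowLens, h, this]
  | succ k => simp [rowLens, h, List.range_succ_eq_map]

end YoungDiagram

def youngDiagramEquiv : YoungDiagram ≃ PartitionList :=
  YoungDiagram.equivListRowLens.trans <| Equiv.subtypeEquivRight fun l => by
    rw [IsPartition, List.sortedGE_iff_pairwise]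

def conjugate : Equiv.Perm PartitionList :=
  youngDiagramEquiv.permCongr YoungDiagram.transposeOrderIso.toEquiv

theorem sum_conjugate (π : PartitionList) : (conjugate π).1.sum = π.1.sum := by
  obtain ⟨μ, rfl⟩ := youngDiagramEquiv.surjective π
  simp [conjugate, youngDiagramEquiv, YoungDiagram.sum_rowLens,
    YoungDiagram.card_transpose]

theorem length_conjugate (π : PartitionList) :
    (conjugate π).1.length = π.1.headI := by
  obtain ⟨μ, rfl⟩ := youngDiagramEquiv.surjective π
  simp [conjugate, youngDiagramEquiv, YoungDiagram.headI_rowLens,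
    YoungDiagram.colLen_transpose]

theorem sum_ofGaps (d : ℕ →₀ ℕ) : (ofGaps d).sum = weight (· + 1) d := by
  rw [← weight_succ_gaps (isPartition_ofGaps d).1, gaps_ofGaps]

theorem headI_ofGaps (d : ℕ →₀ ℕ) : (ofGaps d).headI = degree d := by
  rw [← degree_gaps (isPartition_ofGaps d).1, gaps_ofGaps]

noncomputable def uncuAndrewsPauleEquiv : PartitionList ≃ PartitionList × PartitionList :=
  gapsEquiv.trans <| evenOddSplit.toEquiv.trans <|
    Equiv.prodCongr (gapsEquiv.symm.trans conjugate) gapsEquiv.symm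

theorem sum_add_sum_uncuAndrewsPauleEquiv (π : PartitionList) :
    (uncuAndrewsPauleEquiv π).1.1.sum + (uncuAndrewsPauleEquiv π).2.1.sum = Osum π.1 := by
  have h := weight_evenOddSplit (fun k => k / 2 + 1) (gaps π.1)
  have h1 : (fun i => 2 * i / 2 + 1) = (· + 1) := funext fun i => by omega
  have h2 : (fun i => (2 * i + 1) / 2 + 1) = (· + 1) := funext fun i => by omega
  rw [weight_half_succ_gaps π.2.1, h1, h2] at h
  rw [h, uncuAndrewsPauleEquiv]
  simp [sum_conjugate, sum_ofGaps]

theorem length_add_headI_uncuAndrewsPauleEquiv (π : PartitionList) :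
    (uncuAndrewsPauleEquiv π).1.1.length + (uncuAndrewsPauleEquiv π).2.1.headI = π.1.headI := by
  have h := weight_evenOddSplit (fun _ => 1) (gaps π.1)
  rw [← degree_eq_weight_one, degree_gaps π.2.1] at h
  rw [h, uncuAndrewsPauleEquiv]
  simp [length_conjugate, headI_ofGaps]

/-- The number of partitions with parts `≤ N` and `O(π) = n` equals the number of 2-color
partitions `(ρ, σ)` of `n` (`ρ` red, `σ` green) such that the number of parts of `ρ` plus
the largest part of `σ` is at most `N`. -/
theorem finite_uncu_andrews_paule (N n : ℕ) :
    Nat.card {l : List ℕ // IsPartition l ∧ (∀ x ∈ l, x ≤ N) ∧ Osum l = n} =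
      Nat.card {p : List ℕ × List ℕ //
        IsPartition p.1 ∧ IsPartition p.2 ∧ p.1.sum + p.2.sum = n ∧
          p.1.length + p.2.headI ≤ N} := by
  have key : ∀ π : PartitionList, ((∀ x ∈ π.1, x ≤ N) ∧ Osum π.1 = n) ↔
      ((uncuAndrewsPauleEquiv π).1.1.sum + (uncuAndrewsPauleEquiv π).2.1.sum = n ∧
        (uncuAndrewsPauleEquiv π).1.1.length + (uncuAndrewsPauleEquiv π).2.1.headI ≤ N) :=
    fun π => by
      rw [π.2.1.forall_le_iff_headI_le, sum_add_sum_uncuAndrewsPauleEquiv,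
        length_add_headI_uncuAndrewsPauleEquiv, and_comm]
  calc _ = Nat.card {π : PartitionList // (∀ x ∈ π.1, x ≤ N) ∧ Osum π.1 = n} :=
        Nat.card_congr (Equiv.subtypeSubtypeEquivSubtypeInter _ _).symm
    _ = Nat.card {ρσ : PartitionList × PartitionList //
          ρσ.1.1.sum + ρσ.2.1.sum = n ∧ ρσ.1.1.length + ρσ.2.1.headI ≤ N} :=
        Nat.card_congr (uncuAndrewsPauleEquiv.subtypeEquiv key)
    _ = _ := Nat.card_congr
      { toFun := fun ρσ => ⟨(ρσ.1.1.1, ρσ.1.2.1), ρσ.1.1.2, ρσ.1.2.2, ρσ.2⟩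
        invFun := fun p => ⟨(⟨p.1.1, p.2.1⟩, ⟨p.1.2, p.2.2.1⟩), p.2.2.2⟩
        left_inv := fun _ => rfl
        right_inv := fun _ => rfl }
end
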